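/- Let X be a separable real Banach space, let μ ∈ P_X be a finitely supported measure (μ ∈ F_X) and let ν ∈ P_X with ν ≠ μ. Then the Lévy–Prokhorov distance satisfies π(μ,ν) = min{ε > 0 | μ(A) ≤ ν(closure(A^ε)) + ε for all A ⊆ S_μ}; in particular the infimum defining this set is attained. -/

import Mathlib

open MeasureTheory Metric Set TopologicalSpace

/-- The (one-sided) Lévy–Prokhorov distance of two Borel probability measures. -/
noncomputable def LPdist {X : Type*} [MetricSpace X] [MeasurableSpace X]
    (μ ν : ProbabilityMeasure X) : ℝ :=
  sInf {ε : ℝ | 0 < ε ∧ ∀ A : Set X, MeasurableSet A →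
    (μ : Measure X) A ≤ (ν : Measure X) (thickening ε A) + ENNReal.ofReal ε}

/-- The s-Lévy–Prokhorov distance. -/
noncomputable def LPsdist {X : Type*} [MetricSpace X] [MeasurableSpace X]
    (s : ℝ) (μ ν : ProbabilityMeasure X) : ℝ :=
  sInf {ε : ℝ | 0 < ε ∧ ∀ A : Set X, MeasurableSet A →
    ENNReal.ofReal s * (μ : Measure X) A ≤
      ENNReal.ofReal s * (ν : Measure X) (thickening ε A) + ENNReal.ofReal ε}

/-- The support of a Borel probability measure. -/
def mSupport {X : Type*} [MetricSpace X] [MeasurableSpace X]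
    (μ : ProbabilityMeasure X) : Set X :=
  {x : X | ∀ r : ℝ, 0 < r → 0 < (μ : Measure X) (ball x r)}

/-- The Dirac measure as a probability measure. -/
noncomputable def diracPM {X : Type*} [MeasurableSpace X] (x : X) : ProbabilityMeasure X :=
  ⟨Measure.dirac x, inferInstance⟩

/-- Finitely supported probability measures: finite convex combinations of Dirac measures. -/
def IsFinitelySupported {X : Type*} [MeasurableSpace X] (μ : ProbabilityMeasure X) : Prop :=
  ∃ (s : Finset X) (w : X → ℝ), (∀ x ∈ s, 0 < w x) ∧ (∑ x ∈ s, w x = 1) ∧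
    (μ : Measure X) = ∑ x ∈ s, ENNReal.ofReal (w x) • Measure.dirac x

/-- The unit distance set of a set of probability measures. -/
def unitDistSet {X : Type*} [MetricSpace X] [MeasurableSpace X]
    (𝒜 : Set (ProbabilityMeasure X)) : Set (ProbabilityMeasure X) :=
  {ν | ∀ μ ∈ 𝒜, LPdist μ ν = 1}

/-- The witness function. -/
noncomputable def witness {X : Type*} [MetricSpace X] [MeasurableSpace X]
    (μ : ProbabilityMeasure X) (x : X) : ℝ :=
  LPdist (diracPM x) μ

/-- The s-witness function. -/
noncomputable def switness {X : Type*} [MetricSpace X] [MeasurableSpace X]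
    (s : ℝ) (μ : ProbabilityMeasure X) (x : X) : ℝ :=
  LPsdist s (diracPM x) μ

/-! Every subset of the support of a finitely supported `μ` is finite, hence measurable. Letting
`ε ↓ π(μ,ν)` in the defining inequalities gives `μ A ≤ ν (cthickening π A) + π`, and in a normed
space `cthickening π A = closure (thickening π A)` because `π > 0` (`π = 0` would force `μ = ν`).
Conversely, `μ B = μ (B ∩ S_μ)` and `closure (thickening ε A) ⊆ thickening (ε + δ) A`, so every
admissible `ε` bounds `π` from above. -/

open Filter Topology ENNReal

section MetricSpace

variable {X : Type*} [PseudoMetricSpace X] [MeasurableSpace X]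

theorem tendsto_measure_thickening_nhdsGT [OpensMeasurableSpace X] (μ : Measure X) {δ : ℝ}
    (hδ : 0 ≤ δ) {A : Set X} (hA : ∃ r > δ, μ (thickening r A) ≠ ∞) :
    Tendsto (fun ε => μ (thickening ε A)) (𝓝[>] δ) (𝓝 (μ (cthickening δ A))) := by
  rw [cthickening_eq_iInter_thickening hδ]
  exact tendsto_measure_biInter_gt (fun _ _ => isOpen_thickening.nullMeasurableSet)
    (fun _ _ _ hij => thickening_mono hij A) hA

end MetricSpace

section LPdist

variable {X : Type*} [MetricSpace X] [MeasurableSpace X] {μ ν : ProbabilityMeasure X}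

theorem two_mem_LPdist_set :
    (2 : ℝ) ∈ {ε : ℝ | 0 < ε ∧ ∀ A : Set X, MeasurableSet A →
      (μ : Measure X) A ≤ (ν : Measure X) (thickening ε A) + ENNReal.ofReal ε} := by
  refine ⟨two_pos, fun A _ => ?_⟩
  calc (μ : Measure X) A ≤ 1 := prob_le_one
    _ ≤ ENNReal.ofReal 2 := by norm_num
    _ ≤ _ := le_add_self

theorem LPdist_nonneg : 0 ≤ LPdist μ ν :=
  le_csInf ⟨2, two_mem_LPdist_set⟩ fun _ hε => hε.1.le

theorem LPdist_le_of_forall {ε : ℝ} (hε : 0 < ε)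
    (h : ∀ A : Set X, MeasurableSet A →
      (μ : Measure X) A ≤ (ν : Measure X) (thickening ε A) + ENNReal.ofReal ε) :
    LPdist μ ν ≤ ε :=
  csInf_le ⟨0, fun _ hε => hε.1.le⟩ ⟨hε, h⟩

theorem measure_le_thickening_add_of_LPdist_lt {ε : ℝ} (hε : LPdist μ ν < ε) {A : Set X}
    (hA : MeasurableSet A) :
    (μ : Measure X) A ≤ (ν : Measure X) (thickening ε A) + ENNReal.ofReal ε := by
  obtain ⟨ε', ⟨-, hε'⟩, hε'ε⟩ := exists_lt_of_csInf_lt ⟨2, two_mem_LPdist_set⟩ hε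
  exact (hε' A hA).trans (add_le_add (measure_mono (thickening_mono hε'ε.le A))
    (ENNReal.ofReal_le_ofReal hε'ε.le))

theorem measure_le_cthickening_LPdist_add [OpensMeasurableSpace X] {A : Set X}
    (hA : MeasurableSet A) :
    (μ : Measure X) A ≤
      (ν : Measure X) (cthickening (LPdist μ ν) A) + ENNReal.ofReal (LPdist μ ν) := by
  have hlim := (tendsto_measure_thickening_nhdsGT (A := A) (ν : Measure X) LPdist_nonneg
    ⟨LPdist μ ν + 1, by linarith, measure_ne_top _ _⟩).add
    ((ENNReal.continuous_ofReal.tendsto (LPdist μ ν)).mono_left nhdsWithin_le_nhds)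
  exact ge_of_tendsto hlim (eventually_nhdsWithin_of_forall fun ε hε =>
    measure_le_thickening_add_of_LPdist_lt hε hA)

theorem levyProkhorovEDist_le_ofReal_LPdist [OpensMeasurableSpace X] :
    levyProkhorovEDist (μ : Measure X) (ν : Measure X) ≤ ENNReal.ofReal (LPdist μ ν) := by
  refine levyProkhorovEDist_le_of_forall_le _ _ _ fun ε B hε hε_top hB => ?_
  have hlt : LPdist μ ν < ε.toReal :=
    (ENNReal.ofReal_lt_iff_lt_toReal LPdist_nonneg hε_top.ne).1 hε
  simpa [ENNReal.ofReal_toReal hε_top.ne] using measure_le_thickening_add_of_LPdist_lt hlt hB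

theorem LPdist_pos [BorelSpace X] (h : μ ≠ ν) : 0 < LPdist μ ν := by
  refine LPdist_nonneg.lt_of_ne fun h0 => h ?_
  have hLP : levyProkhorovEDist (μ : Measure X) (ν : Measure X) = 0 :=
    nonpos_iff_eq_zero.1 (levyProkhorovEDist_le_ofReal_LPdist.trans_eq (by simp [← h0]))
  have : LevyProkhorov.ofMeasure μ = LevyProkhorov.ofMeasure ν :=
    edist_eq_zero.1 (by rwa [LevyProkhorov.edist_probabilityMeasure_def])
  exact LevyProkhorov.ofMeasure.inj this

theorem LPdist_le_of_forall_subset {S : Set X} (hS : (μ : Measure X) Sᶜ = 0) {ε : ℝ}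
    (hε : 0 < ε) (h : ∀ A ⊆ S,
      (μ : Measure X) A ≤ (ν : Measure X) (closure (thickening ε A)) + ENNReal.ofReal ε) :
    LPdist μ ν ≤ ε := by
  refine le_of_forall_pos_le_add fun δ hδ => LPdist_le_of_forall (by linarith) fun B _ => ?_
  have hclosure : closure (thickening ε (B ∩ S)) ⊆ thickening (ε + δ) B :=
    (closure_thickening_subset_cthickening ε _).trans <|
      (cthickening_subset_thickening' (by linarith) (by linarith) _).trans <|
        thickening_subset_of_subset _ inter_subset_left
  calc (μ : Measure X) B = (μ : Measure X) (B ∩ S) := (measure_inter_conull hS).symm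
    _ ≤ (ν : Measure X) (closure (thickening ε (B ∩ S))) + ENNReal.ofReal ε :=
      h _ inter_subset_right
    _ ≤ (ν : Measure X) (thickening (ε + δ) B) + ENNReal.ofReal (ε + δ) :=
      add_le_add (measure_mono hclosure) (ENNReal.ofReal_le_ofReal (by linarith))

end LPdist

section FiniteSupport

variable {X : Type*} [MetricSpace X] [MeasurableSpace X] [OpensMeasurableSpace X]

theorem measure_compl_eq_zero_of_eq_sum_dirac {μ : Measure X} {s : Finset X} {w : X → ℝ≥0∞}
    (hμ : μ = ∑ x ∈ s, w x • Measure.dirac x) : μ (↑s)ᶜ = 0 := by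
  rw [hμ, Measure.finsetSum_apply]
  refine Finset.sum_eq_zero fun x hx => ?_
  simp [Measure.dirac_apply' _ s.finite_toSet.measurableSet.compl, hx]

theorem mSupport_eq_of_eq_sum_dirac {μ : ProbabilityMeasure X} {s : Finset X} {w : X → ℝ}
    (hw : ∀ x ∈ s, 0 < w x)
    (hμ : (μ : Measure X) = ∑ x ∈ s, ENNReal.ofReal (w x) • Measure.dirac x) :
    mSupport μ = s := by
  refine Subset.antisymm (fun x hx => ?_) fun x hx r hr => ?_
  · by_contra hxs
    obtain ⟨r, hr, hball⟩ := Metric.isOpen_iff.1 s.finite_toSet.isClosed.isOpen_compl x hxs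
    exact (hx r hr).ne' (measure_mono_null hball (measure_compl_eq_zero_of_eq_sum_dirac hμ))
  · rw [hμ, Measure.finsetSum_apply]
    refine lt_of_lt_of_le ?_ (Finset.single_le_sum (fun _ _ => zero_le) hx)
    simpa [Measure.dirac_apply_of_mem (mem_ball_self hr)] using hw x hx

end FiniteSupport

theorem LPdist_isLeast_general {X : Type*} [NormedAddCommGroup X] [NormedSpace ℝ X]
    [MeasurableSpace X] [BorelSpace X]
    (μ ν : ProbabilityMeasure X) (hμ : IsFinitelySupported μ) (hne : ν ≠ μ) :
    IsLeast {ε : ℝ | 0 < ε ∧ ∀ A : Set X, A ⊆ mSupport μ →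
        (μ : Measure X) A ≤ (ν : Measure X) (closure (thickening ε A)) + ENNReal.ofReal ε}
      (LPdist μ ν) := by
  obtain ⟨s, w, hw, -, hμs⟩ := hμ
  have hsupp : mSupport μ = s := mSupport_eq_of_eq_sum_dirac hw hμs
  have hnull : (μ : Measure X) (mSupport μ)ᶜ = 0 :=
    hsupp ▸ measure_compl_eq_zero_of_eq_sum_dirac hμs
  have hpos : 0 < LPdist μ ν := LPdist_pos hne.symm
  refine ⟨⟨hpos, fun A hA => ?_⟩, fun ε ⟨hε, h⟩ => LPdist_le_of_forall_subset hnull hε h⟩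
  have hA_finite : A.Finite := s.finite_toSet.subset (hsupp ▸ hA)
  rw [closure_thickening hpos]
  exact measure_le_cthickening_LPdist_add hA_finite.measurableSet

/-- Proposition 3.1: for a finitely supported `μ` and any `ν ≠ μ`, the Lévy–Prokhorov
distance is attained as the minimum of the set of `ε > 0` such that
`μ(A) ≤ ν(closure(A^ε)) + ε` for every `A ⊆ S_μ`. -/
theorem LPdist_isLeast {X : Type*} [NormedAddCommGroup X] [NormedSpace ℝ X]
    [CompleteSpace X] [SeparableSpace X] [MeasurableSpace X] [BorelSpace X]
    (μ ν : ProbabilityMeasure X) (hμ : IsFinitelySupported μ) (hne : ν ≠ μ) :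
    IsLeast {ε : ℝ | 0 < ε ∧ ∀ A : Set X, A ⊆ mSupport μ →
        (μ : Measure X) A ≤ (ν : Measure X) (closure (thickening ε A)) + ENNReal.ofReal ε}
      (LPdist μ ν) :=
  LPdist_isLeast_general μ ν hμ hne
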